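/- arXiv:2412.03070 — 2 statements merged into one kernel-verified Lean document; each statement's English description precedes it below -/
import Mathlib

section
/- Let σ ∈ ℝ^{d×d} with σσᵀ positive definite, σ* ∈ ℝ^d, and Σ = (σ, σ*). Then the squared Euclidean norm of the row vector (σ*)ᵀ(ΣΣᵀ)⁻¹Σ ∈ ℝ^{1×(d+1)} equals s/(1+s), where s = (σ*)ᵀ(σσᵀ)⁻¹σ* ≥ 0; in particular |(σ*)ᵀ(ΣΣᵀ)⁻¹Σ|² < 1. -/
open Matrix

/-- For `Σ = (σ, σ*)` with `σσᵀ` positive definite, the squared Euclidean norm of the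
row vector `(σ*)ᵀ(ΣΣᵀ)⁻¹Σ` equals `s/(1+s)` with `s = (σ*)ᵀ(σσᵀ)⁻¹σ* ≥ 0`;
in particular it is `< 1`. -/
theorem row_vector_norm_sq_lt_one (d : ℕ)
    (σ : Matrix (Fin d) (Fin d) ℝ) (σstar : Fin d → ℝ)
    (hpd : (σ * σᵀ).PosDef)
    (S : Matrix (Fin d) (Fin d ⊕ Unit) ℝ)
    (hS : S = Matrix.fromCols σ (Matrix.of fun i (_ : Unit) => σstar i))
    (s : ℝ) (hs : s = σstar ⬝ᵥ ((σ * σᵀ)⁻¹ *ᵥ σstar))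
    (w : Fin d ⊕ Unit → ℝ) (hw : w = Sᵀ *ᵥ ((S * Sᵀ)⁻¹ *ᵥ σstar)) :
    0 ≤ s ∧ w ⬝ᵥ w = s / (1 + s) ∧ w ⬝ᵥ w < 1 := by
  set A := σ * σᵀ with hAdef
  set C : Matrix (Fin d) Unit ℝ := Matrix.of fun i (_ : Unit) => σstar i with hC
  -- s ≥ 0
  have hsnn : 0 ≤ s := by
    have h := hpd.inv.posSemidef.re_dotProduct_nonneg σstar
    simpa [hs, RCLike.re_to_real] using h
  have h1s : (0:ℝ) < 1 + s := by linarith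
  have h1s' : (1:ℝ) + s ≠ 0 := ne_of_gt h1s
  -- S * Sᵀ decomposition
  have hM : S * Sᵀ = A + C * Cᵀ := by
    rw [hS, transpose_fromCols, fromCols_mul_fromRows]
  -- S * Sᵀ is positive definite
  have hMpd : (S * Sᵀ).PosDef := by
    rw [hM]
    refine hpd.add_posSemidef ?_
    have := Matrix.posSemidef_self_mul_conjTranspose C
    simpa [Matrix.conjTranspose_eq_transpose_of_trivial] using this
  have hMunit : IsUnit (S * Sᵀ).det := Matrix.isUnit_iff_isUnit_det _ |>.1 hMpd.isUnit
  have hAunit : IsUnit A.det := Matrix.isUnit_iff_isUnit_det _ |>.1 hpd.isUnit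
  -- the candidate vector
  set v : Fin d → ℝ := (1 + s)⁻¹ • (A⁻¹ *ᵥ σstar) with hv
  have hAv : A *ᵥ (A⁻¹ *ᵥ σstar) = σstar := by
    rw [Matrix.mulVec_mulVec, Matrix.mul_nonsing_inv _ hAunit, Matrix.one_mulVec]
  have hCCv : ∀ x : Fin d → ℝ, (C * Cᵀ) *ᵥ x = (σstar ⬝ᵥ x) • σstar := by
    intro x
    funext i
    simp [Matrix.mulVec, Matrix.mul_apply, dotProduct, hC, Finset.mul_sum,
      Finset.sum_mul, mul_comm, mul_left_comm]
  have hMv : (S * Sᵀ) *ᵥ v = σstar := by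
    rw [hM, Matrix.add_mulVec, hv]
    rw [Matrix.mulVec_smul, hAv, hCCv]
    have hdp : σstar ⬝ᵥ ((1 + s)⁻¹ • (A⁻¹ *ᵥ σstar)) = (1 + s)⁻¹ * s := by
      rw [dotProduct_smul, hs]; simp [smul_eq_mul]
    rw [hdp]
    funext i
    simp only [Pi.add_apply, Pi.smul_apply, smul_eq_mul]
    field_simp
  -- hence (S*Sᵀ)⁻¹ *ᵥ σstar = v
  have hinvv : (S * Sᵀ)⁻¹ *ᵥ σstar = v := by
    conv_lhs => rw [← hMv]
    rw [Matrix.mulVec_mulVec, Matrix.nonsing_inv_mul _ hMunit, Matrix.one_mulVec]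
  -- compute w ⬝ᵥ w
  have hww : w ⬝ᵥ w = s / (1 + s) := by
    rw [hw, hinvv]
    have h1 : (Sᵀ *ᵥ v) ⬝ᵥ (Sᵀ *ᵥ v) = v ⬝ᵥ ((S * Sᵀ) *ᵥ v) := by
      rw [Matrix.mulVec_transpose, ← Matrix.dotProduct_mulVec, ← Matrix.mulVec_transpose, Matrix.mulVec_mulVec]
    rw [h1, hMv, hv, smul_dotProduct, dotProduct_comm (A⁻¹ *ᵥ σstar) σstar, ← hs]
    rw [smul_eq_mul, div_eq_inv_mul]
  refine ⟨hsnn, hww, ?_⟩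
  rw [hww]
  rw [div_lt_one h1s]
  linarith
end

section
/- Let G, Gₙ : [0,1]² → [0,1] be measurable with Gₙ a step function constant on squares ((i−1)/n,i/n]×((j−1)/n,j/n]. Suppose n‖Gₙ − G‖₂² → 0 and max_{1≤i≤n} max_{u∈((i−1)/n,i/n]} ∫₀¹|G(i/n,v) − G(u,v)|² dv → 0 as n → ∞. Then max_{1≤i≤n} ∫₀¹ |Gₙ(i/n,v) − G(i/n,v)| dv → 0 as n → ∞. -/
open MeasureTheory Filter

lemma aux_partition (n : ℕ) (hn : 0 < n) (v : ℝ) (hv : v ∈ Set.Ioc (0:ℝ) 1) :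
    ∃ j : Fin n, v ∈ Set.Ioc ((j:ℝ)/n) (((j:ℝ)+1)/n) := by
  have hn' : (0:ℝ) < n := Nat.cast_pos.2 hn
  have hvn : 0 < v * n := mul_pos hv.1 hn'
  set m := ⌈v * n⌉₊ with hm
  have hm1 : 1 ≤ m := Nat.one_le_ceil_iff.2 hvn
  have hmn : m ≤ n := Nat.ceil_le.2 (by nlinarith [hv.2])
  refine ⟨⟨m - 1, by omega⟩, ?_, ?_⟩
  · show ((m - 1 : ℕ) : ℝ) / n < v
    rw [div_lt_iff₀ hn', Nat.cast_sub hm1]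
    have := Nat.ceil_lt_add_one hvn.le
    push_cast; linarith
  · show v ≤ (((m - 1 : ℕ) : ℝ) + 1) / n
    rw [le_div_iff₀ hn', Nat.cast_sub hm1]
    have := Nat.le_ceil (v * n)
    push_cast [Nat.cast_sub hm1]; linarith

lemma aux_ptwise (x d : ℝ) (hx0 : 0 ≤ x) (hx1 : x ≤ 1) (hd0 : 0 < d) :
    x ≤ d + x ^ 2 / d ^ 2 := by
  have hd2 : (0:ℝ) < d ^ 2 := by positivity
  have h1 : (x - d) * d ^ 2 ≤ x ^ 2 := by nlinarith [sq_nonneg (x - d), sq_nonneg x]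
  have h2 : x - d ≤ x ^ 2 / d ^ 2 := (le_div_iff₀ hd2).mpr h1
  linarith

/-- Uniform (in `i`) convergence of `∫₀¹ |Gₙ(i/n,v) − G(i/n,v)| dv` to `0` under the
assumptions `n‖Gₙ−G‖₂² → 0` and uniform `L²`-continuity of `G` along the partition. -/
theorem step_graphon_uniform_convergence
    (G : ℝ → ℝ → ℝ) (Gn : ℕ → ℝ → ℝ → ℝ)
    (hGmeas : Measurable fun p : ℝ × ℝ => G p.1 p.2)
    (hGnmeas : ∀ n, Measurable fun p : ℝ × ℝ => Gn n p.1 p.2)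
    (hGrange : ∀ u v, u ∈ Set.Icc (0:ℝ) 1 → v ∈ Set.Icc (0:ℝ) 1 → G u v ∈ Set.Icc (0:ℝ) 1)
    (hGnrange : ∀ n u v, u ∈ Set.Icc (0:ℝ) 1 → v ∈ Set.Icc (0:ℝ) 1 → Gn n u v ∈ Set.Icc (0:ℝ) 1)
    (hstep : ∀ n : ℕ, ∀ i j : Fin n, ∀ u v : ℝ,
      u ∈ Set.Ioc ((i : ℝ) / n) (((i : ℝ) + 1) / n) →
      v ∈ Set.Ioc ((j : ℝ) / n) (((j : ℝ) + 1) / n) →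
      Gn n u v = Gn n (((i : ℝ) + 1) / n) (((j : ℝ) + 1) / n))
    (hL2 : Tendsto (fun n : ℕ =>
        (n : ℝ) * ∫ u in (0:ℝ)..1, ∫ v in (0:ℝ)..1, |Gn n u v - G u v| ^ 2)
      atTop (nhds 0))
    (hGcont : Tendsto (fun n : ℕ =>
        ⨆ i : Fin n, ⨆ u : Set.Ioc ((i : ℝ) / n) (((i : ℝ) + 1) / n),
          ∫ v in (0:ℝ)..1, |G (((i : ℝ) + 1) / n) v - G (u : ℝ) v| ^ 2)
      atTop (nhds 0)) :
    Tendsto (fun n : ℕ =>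
        ⨆ i : Fin n,
          ∫ v in (0:ℝ)..1, |Gn n (((i : ℝ) + 1) / n) v - G (((i : ℝ) + 1) / n) v|)
      atTop (nhds 0) := by
  classical
  set S : ℕ → ℝ := fun n => ⨆ i : Fin n, ⨆ u : Set.Ioc ((i : ℝ) / n) (((i : ℝ) + 1) / n),
      ∫ v in (0:ℝ)..1, |G (((i : ℝ) + 1) / n) v - G (u : ℝ) v| ^ 2 with hSdef
  set L : ℕ → ℝ := fun n =>
      (n : ℝ) * ∫ u in (0:ℝ)..1, ∫ v in (0:ℝ)..1, |Gn n u v - G u v| ^ 2 with hLdef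
  have hIocM : MeasurableSet (Set.Ioc (0:ℝ) 1) := measurableSet_Ioc
  have hvol : (volume (Set.Ioc (0:ℝ) 1)).toReal = 1 := by
    simp [Real.volume_Ioc]
  -- integrability of bounded measurable functions on Ioc 0 1
  have hint : ∀ f : ℝ → ℝ, Measurable f → (∀ v ∈ Set.Ioc (0:ℝ) 1, |f v| ≤ 1) →
      IntegrableOn f (Set.Ioc (0:ℝ) 1) := by
    intro f hf hb
    refine Measure.integrableOn_of_bounded (M := 1) measure_Ioc_lt_top.ne
      hf.aestronglyMeasurable ?_
    rw [ae_restrict_iff' hIocM]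
    exact ae_of_all _ hb
  -- sections are measurable
  have hsecG : ∀ u : ℝ, Measurable (fun v => G u v) :=
    fun u => hGmeas.comp measurable_prodMk_left
  have hsecGn : ∀ n : ℕ, ∀ u : ℝ, Measurable (fun v => Gn n u v) :=
    fun n u => (hGnmeas n).comp measurable_prodMk_left
  -- difference bound
  have hdiff : ∀ a b : ℝ, a ∈ Set.Icc (0:ℝ) 1 → b ∈ Set.Icc (0:ℝ) 1 → |a - b| ≤ 1 := by
    intro a b ha hb
    rw [abs_sub_le_iff]
    constructor <;> linarith [ha.1, ha.2, hb.1, hb.2]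
  -- KEY ESTIMATE
  have key : ∀ n : ℕ, 0 < n → ∀ i : Fin n,
      (∫ v in Set.Ioc (0:ℝ) 1, |Gn n (((i:ℝ)+1)/n) v - G (((i:ℝ)+1)/n) v| ^ 2)
        ≤ 2 * L n + 2 * S n := by
    intro n hn i
    have hn' : (0:ℝ) < n := Nat.cast_pos.2 hn
    set c : ℝ := ((i:ℝ)+1)/n with hc
    have hc0 : 0 < c := by positivity
    have hc1 : c ≤ 1 := by
      rw [hc, div_le_one hn']
      exact_mod_cast Nat.succ_le_of_lt i.isLt
    have hi0 : 0 ≤ (i:ℝ)/n := by positivity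
    have hic : (i:ℝ)/n < c := by
      rw [hc]; exact (div_lt_div_iff_of_pos_right hn').2 (by linarith)
    set I : Set ℝ := Set.Ioc ((i:ℝ)/n) c with hIdef
    have hIsub : I ⊆ Set.Ioc (0:ℝ) 1 :=
      fun x hx => ⟨lt_of_le_of_lt hi0 hx.1, hx.2.trans hc1⟩
    have hIM : MeasurableSet I := measurableSet_Ioc
    have hcI : c ∈ I := ⟨hic, le_refl c⟩
    have hc01 : c ∈ Set.Icc (0:ℝ) 1 := ⟨hc0.le, hc1⟩
    -- Gn is constant in u on the strip
    have hGnc : ∀ u ∈ I, ∀ v ∈ Set.Ioc (0:ℝ) 1, Gn n u v = Gn n c v := by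
      intro u hu v hv
      obtain ⟨j, hj⟩ := aux_partition n hn v hv
      rw [hstep n i j u v hu hj, hstep n i j c v hcI hj]
    -- the function g
    set g : ℝ → ℝ := fun u => ∫ v in Set.Ioc (0:ℝ) 1, |Gn n u v - G u v| ^ 2 with hgdef
    have hgmeas : Measurable g := by
      have h1 : StronglyMeasurable fun p : ℝ × ℝ => |Gn n p.1 p.2 - G p.1 p.2| ^ 2 :=
        (((hGnmeas n).sub hGmeas).abs.pow_const 2).stronglyMeasurable
      exact h1.integral_prod_right'.measurable
    have hg_nonneg : ∀ u, 0 ≤ g u := fun u => integral_nonneg (fun v => by positivity)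
    have hg_bdd : ∀ u ∈ Set.Ioc (0:ℝ) 1, |g u| ≤ 1 := by
      intro u hu
      have hu' : u ∈ Set.Icc (0:ℝ) 1 := Set.Ioc_subset_Icc_self hu
      have := norm_setIntegral_le_of_norm_le_const (μ := volume) (s := Set.Ioc (0:ℝ) 1)
        (f := fun v => |Gn n u v - G u v| ^ 2) (C := 1) measure_Ioc_lt_top ?_
      · rw [Real.norm_eq_abs] at this
        calc |g u| ≤ 1 * (volume (Set.Ioc (0:ℝ) 1)).toReal := this
        _ = 1 := by rw [hvol, mul_one]
      · intro v hv
        have hv' : v ∈ Set.Icc (0:ℝ) 1 := Set.Ioc_subset_Icc_self hv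
        have h1 := hdiff _ _ (hGnrange n u v hu' hv') (hGrange u v hu' hv')
        show ‖|Gn n u v - G u v| ^ 2‖ ≤ 1
        rw [Real.norm_eq_abs, abs_of_nonneg (by positivity)]
        exact pow_le_one₀ (abs_nonneg _) h1
    have hgIoc : IntegrableOn g (Set.Ioc (0:ℝ) 1) := hint g hgmeas hg_bdd
    have hgI : IntegrableOn g I := hgIoc.mono_set hIsub
    -- pointwise-in-u estimate
    have hF : ∀ u ∈ I,
        (∫ v in Set.Ioc (0:ℝ) 1, |Gn n c v - G c v| ^ 2) ≤ 2 * g u + 2 * S n := by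
      intro u hu
      have hu01 : u ∈ Set.Icc (0:ℝ) 1 := Set.Ioc_subset_Icc_self (hIsub hu)
      -- pointwise in v
      have hpt : ∀ v ∈ Set.Ioc (0:ℝ) 1,
          |Gn n c v - G c v| ^ 2
            ≤ 2 * |Gn n u v - G u v| ^ 2 + 2 * |G c v - G u v| ^ 2 := by
        intro v hv
        rw [← hGnc u hu v hv]
        have h1 : |Gn n u v - G c v| ≤ |Gn n u v - G u v| + |G u v - G c v| :=
          abs_sub_le _ _ _
        have h2 : |G c v - G u v| = |G u v - G c v| := abs_sub_comm _ _
        rw [h2]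
        nlinarith [sq_nonneg (|Gn n u v - G u v| - |G u v - G c v|),
          abs_nonneg (Gn n u v - G c v), abs_nonneg (Gn n u v - G u v),
          abs_nonneg (G u v - G c v),
          mul_self_le_mul_self (abs_nonneg (Gn n u v - G c v)) h1]
      -- integrabilities
      have hintc : IntegrableOn (fun v => |Gn n c v - G c v| ^ 2) (Set.Ioc (0:ℝ) 1) := by
        refine hint _ (((hsecGn n c).sub (hsecG c)).abs.pow_const 2) ?_
        intro v hv
        have hv' : v ∈ Set.Icc (0:ℝ) 1 := Set.Ioc_subset_Icc_self hv
        have h1 := hdiff _ _ (hGnrange n c v hc01 hv') (hGrange c v hc01 hv')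
        show abs (|Gn n c v - G c v| ^ 2) ≤ 1
        rw [abs_of_nonneg (by positivity)]
        exact pow_le_one₀ (abs_nonneg _) h1
      have hintu : IntegrableOn (fun v => |Gn n u v - G u v| ^ 2) (Set.Ioc (0:ℝ) 1) := by
        refine hint _ (((hsecGn n u).sub (hsecG u)).abs.pow_const 2) ?_
        intro v hv
        have hv' : v ∈ Set.Icc (0:ℝ) 1 := Set.Ioc_subset_Icc_self hv
        have h1 := hdiff _ _ (hGnrange n u v hu01 hv') (hGrange u v hu01 hv')
        show abs (|Gn n u v - G u v| ^ 2) ≤ 1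
        rw [abs_of_nonneg (by positivity)]
        exact pow_le_one₀ (abs_nonneg _) h1
      have hintG : IntegrableOn (fun v => |G c v - G u v| ^ 2) (Set.Ioc (0:ℝ) 1) := by
        refine hint _ (((hsecG c).sub (hsecG u)).abs.pow_const 2) ?_
        intro v hv
        have hv' : v ∈ Set.Icc (0:ℝ) 1 := Set.Ioc_subset_Icc_self hv
        have h1 := hdiff _ _ (hGrange c v hc01 hv') (hGrange u v hu01 hv')
        show abs (|G c v - G u v| ^ 2) ≤ 1
        rw [abs_of_nonneg (by positivity)]
        exact pow_le_one₀ (abs_nonneg _) h1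
      have hmono := setIntegral_mono_on hintc
        ((hintu.const_mul 2).add (hintG.const_mul 2)) hIocM hpt
      have hsplit : (∫ v in Set.Ioc (0:ℝ) 1,
            (2 * |Gn n u v - G u v| ^ 2 + 2 * |G c v - G u v| ^ 2))
          = 2 * g u + 2 * ∫ v in Set.Ioc (0:ℝ) 1, |G c v - G u v| ^ 2 := by
        rw [integral_add (hintu.const_mul 2) (hintG.const_mul 2),
          integral_const_mul, integral_const_mul]
      -- bound the G-continuity term by S n
      have hterm_bdd : ∀ (i' : Fin n)
          (u' : Set.Ioc ((i':ℝ)/n) (((i':ℝ)+1)/n)),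
          (∫ v in (0:ℝ)..1, |G (((i':ℝ)+1)/n) v - G (u':ℝ) v| ^ 2) ≤ 1 := by
        intro i' u'
        have hc'0 : (0:ℝ) ≤ ((i':ℝ)+1)/n := by positivity
        have hc'1 : ((i':ℝ)+1)/n ≤ 1 := by
          rw [div_le_one hn']; exact_mod_cast Nat.succ_le_of_lt i'.isLt
        have hu'0 : (0:ℝ) ≤ (u':ℝ) := le_trans (by positivity) u'.2.1.le
        have hu'1 : (u':ℝ) ≤ 1 := u'.2.2.trans hc'1
        rw [intervalIntegral.integral_of_le zero_le_one]
        have := norm_setIntegral_le_of_norm_le_const (μ := volume) (s := Set.Ioc (0:ℝ) 1)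
          (f := fun v => |G (((i':ℝ)+1)/n) v - G (u':ℝ) v| ^ 2) (C := 1)
          measure_Ioc_lt_top ?_
        · rw [Real.norm_eq_abs, measureReal_def, hvol, mul_one] at this
          exact (abs_le.1 this).2
        · intro v hv
          have hv' : v ∈ Set.Icc (0:ℝ) 1 := Set.Ioc_subset_Icc_self hv
          have h1 := hdiff _ _ (hGrange _ v ⟨hc'0, hc'1⟩ hv') (hGrange _ v ⟨hu'0, hu'1⟩ hv')
          show ‖|G (((i':ℝ)+1)/n) v - G (u':ℝ) v| ^ 2‖ ≤ 1
          rw [Real.norm_eq_abs, abs_of_nonneg (by positivity)]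
          exact pow_le_one₀ (abs_nonneg _) h1
      have hiS : (∫ v in Set.Ioc (0:ℝ) 1, |G c v - G u v| ^ 2) ≤ S n := by
        have hbdd_inner : ∀ i' : Fin n,
            BddAbove (Set.range fun u' : Set.Ioc ((i':ℝ)/n) (((i':ℝ)+1)/n) =>
              ∫ v in (0:ℝ)..1, |G (((i':ℝ)+1)/n) v - G (u':ℝ) v| ^ 2) := by
          intro i'
          exact ⟨1, by rintro x ⟨u', rfl⟩; exact hterm_bdd i' u'⟩
        have hbdd_outer : BddAbove (Set.range fun i' : Fin n =>
            ⨆ u' : Set.Ioc ((i':ℝ)/n) (((i':ℝ)+1)/n),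
              ∫ v in (0:ℝ)..1, |G (((i':ℝ)+1)/n) v - G (u':ℝ) v| ^ 2) := by
          refine ⟨1, ?_⟩
          rintro x ⟨i', rfl⟩
          exact Real.iSup_le (fun u' => hterm_bdd i' u') zero_le_one
        have huI : u ∈ Set.Ioc ((i:ℝ)/n) (((i:ℝ)+1)/n) := hu
        have h1 : (∫ v in (0:ℝ)..1, |G (((i:ℝ)+1)/n) v - G u v| ^ 2)
            ≤ ⨆ u' : Set.Ioc ((i:ℝ)/n) (((i:ℝ)+1)/n),
              ∫ v in (0:ℝ)..1, |G (((i:ℝ)+1)/n) v - G (u':ℝ) v| ^ 2 :=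
          le_ciSup (hbdd_inner i) ⟨u, huI⟩
        have h2 : (⨆ u' : Set.Ioc ((i:ℝ)/n) (((i:ℝ)+1)/n),
              ∫ v in (0:ℝ)..1, |G (((i:ℝ)+1)/n) v - G (u':ℝ) v| ^ 2) ≤ S n :=
          le_ciSup hbdd_outer i
        have h3 : (∫ v in Set.Ioc (0:ℝ) 1, |G c v - G u v| ^ 2)
            = ∫ v in (0:ℝ)..1, |G (((i:ℝ)+1)/n) v - G u v| ^ 2 :=
          (intervalIntegral.integral_of_le zero_le_one).symm
        rw [h3]
        exact le_trans h1 h2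
      simp only [Pi.add_apply] at hmono
      linarith [hmono, hsplit.symm.le]
    -- averaging over u in I
    have hvolI : (volume I).toReal = 1 / n := by
      rw [hIdef, Real.volume_Ioc, hc]
      rw [ENNReal.toReal_ofReal (by linarith)]
      field_simp
      ring
    have havg : (∫ v in Set.Ioc (0:ℝ) 1, |Gn n c v - G c v| ^ 2) * (1/n)
        ≤ 2 * (∫ u in I, g u) + 2 * S n * (1/n) := by
      have h1 : (∫ _ in I, (∫ v in Set.Ioc (0:ℝ) 1, |Gn n c v - G c v| ^ 2))
          = (∫ v in Set.Ioc (0:ℝ) 1, |Gn n c v - G c v| ^ 2) * (1/n) := by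
        rw [setIntegral_const, smul_eq_mul, measureReal_def, hvolI, mul_comm]
      have h2 := setIntegral_mono_on
        (integrableOn_const measure_Ioc_lt_top.ne)
        ((hgI.const_mul 2).add (integrableOn_const measure_Ioc_lt_top.ne))
        hIM hF
      simp only [Pi.add_apply] at h2
      rw [h1, integral_add (hgI.const_mul 2)
        (integrableOn_const measure_Ioc_lt_top.ne),
        integral_const_mul, setIntegral_const, smul_eq_mul, measureReal_def, hvolI] at h2
      linarith
    -- compare with the full integral
    have hIle : (∫ u in I, g u) ≤ ∫ u in Set.Ioc (0:ℝ) 1, g u :=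
      setIntegral_mono_set hgIoc (ae_of_all _ hg_nonneg)
        (HasSubset.Subset.eventuallyLE hIsub)
    have hLn : L n = n * ∫ u in Set.Ioc (0:ℝ) 1, g u := by
      have e1 : ∀ u : ℝ, (∫ v in (0:ℝ)..1, |Gn n u v - G u v| ^ 2) = g u :=
        fun u => intervalIntegral.integral_of_le zero_le_one
      show ((n : ℝ) * ∫ u in (0:ℝ)..1, ∫ v in (0:ℝ)..1, |Gn n u v - G u v| ^ 2)
          = n * ∫ u in Set.Ioc (0:ℝ) 1, g u
      rw [intervalIntegral.integral_of_le (zero_le_one (α := ℝ))]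
      congr 1
      exact setIntegral_congr_fun hIocM (fun u _ => e1 u)
    have hgoal : (∫ v in Set.Ioc (0:ℝ) 1, |Gn n c v - G c v| ^ 2)
        ≤ 2 * L n + 2 * S n := by
      have h3 := mul_le_mul_of_nonneg_right havg hn'.le
      rw [hLn]
      have hne : (n:ℝ) ≠ 0 := hn'.ne'
      have hexp : (∫ v in Set.Ioc (0:ℝ) 1, |Gn n c v - G c v| ^ 2) * (1/n) * n
          = ∫ v in Set.Ioc (0:ℝ) 1, |Gn n c v - G c v| ^ 2 := by
        field_simp
      rw [hexp] at h3
      have : (2 * (∫ u in I, g u) + 2 * S n * (1/n)) * n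
          ≤ 2 * ((n:ℝ) * ∫ u in Set.Ioc (0:ℝ) 1, g u) + 2 * S n := by
        have h4 : 2 * S n * (1/n) * n = 2 * S n := by field_simp
        nlinarith [hIle]
      linarith
    exact hgoal
  -- nonnegativity of sup
  have hsup_nonneg : ∀ n : ℕ, 0 ≤ ⨆ i : Fin n,
      ∫ v in (0:ℝ)..1, |Gn n (((i:ℝ)+1)/n) v - G (((i:ℝ)+1)/n) v| := by
    intro n
    apply Real.iSup_nonneg
    intro i
    rw [intervalIntegral.integral_of_le zero_le_one]
    exact integral_nonneg (fun v => abs_nonneg _)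
  -- combined tendsto
  have hT : Tendsto (fun n => 2 * L n + 2 * S n) atTop (nhds 0) := by
    have h := (hL2.const_mul 2).add (hGcont.const_mul 2)
    simpa only [mul_zero, add_zero] using h
  rw [Metric.tendsto_atTop]
  intro ε hε
  set δ : ℝ := min (ε/3) 1 with hδdef
  have hδ0 : 0 < δ := lt_min (by linarith) one_pos
  have hδ1 : δ ≤ 1 := min_le_right _ _
  have hδε : 2 * δ < ε := by
    have : δ ≤ ε/3 := min_le_left _ _
    linarith
  have hδ3 : (0:ℝ) < δ ^ 3 := by positivity
  have hev : ∀ᶠ n in atTop, 2 * L n + 2 * S n < δ ^ 3 :=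
    hT.eventually_lt_const hδ3
  rw [eventually_atTop] at hev
  obtain ⟨N, hN⟩ := hev
  refine ⟨max N 1, fun n hn => ?_⟩
  have hnN : N ≤ n := le_trans (le_max_left _ _) hn
  have hn1 : 0 < n := lt_of_lt_of_le one_pos (le_trans (le_max_right _ _) hn)
  have hn' : (0:ℝ) < n := Nat.cast_pos.2 hn1
  rw [Real.dist_eq, sub_zero, abs_of_nonneg (hsup_nonneg n)]
  have : Nonempty (Fin n) := Fin.pos_iff_nonempty.1 hn1
  refine lt_of_le_of_lt (ciSup_le fun i => ?_) hδε
  -- per-i bound: A n i ≤ 2δ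
  set c : ℝ := ((i:ℝ)+1)/n with hc
  have hc0 : 0 < c := by positivity
  have hc1 : c ≤ 1 := by
    rw [hc, div_le_one hn']
    exact_mod_cast Nat.succ_le_of_lt i.isLt
  have hc01 : c ∈ Set.Icc (0:ℝ) 1 := ⟨hc0.le, hc1⟩
  have hb : ∀ v ∈ Set.Ioc (0:ℝ) 1, |Gn n c v - G c v| ≤ 1 := by
    intro v hv
    have hv' : v ∈ Set.Icc (0:ℝ) 1 := Set.Ioc_subset_Icc_self hv
    exact hdiff _ _ (hGnrange n c v hc01 hv') (hGrange c v hc01 hv')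
  have hintf : IntegrableOn (fun v => |Gn n c v - G c v|) (Set.Ioc (0:ℝ) 1) := by
    refine hint _ ((hsecGn n c).sub (hsecG c)).abs ?_
    intro v hv
    show abs (abs (Gn n c v - G c v)) ≤ 1
    rw [abs_abs]; exact hb v hv
  have hintf2 : IntegrableOn (fun v => |Gn n c v - G c v| ^ 2) (Set.Ioc (0:ℝ) 1) := by
    refine hint _ (((hsecGn n c).sub (hsecG c)).abs.pow_const 2) ?_
    intro v hv
    show abs (|Gn n c v - G c v| ^ 2) ≤ 1
    rw [abs_of_nonneg (by positivity)]
    exact pow_le_one₀ (abs_nonneg _) (hb v hv)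
  have hptw : ∀ v ∈ Set.Ioc (0:ℝ) 1,
      |Gn n c v - G c v| ≤ δ + |Gn n c v - G c v| ^ 2 / δ ^ 2 :=
    fun v hv => aux_ptwise _ δ (abs_nonneg _) (hb v hv) hδ0
  have hmono := setIntegral_mono_on hintf
    ((integrableOn_const measure_Ioc_lt_top.ne).add (hintf2.div_const _)) hIocM hptw
  simp only [Pi.add_apply] at hmono
  rw [integral_add (integrableOn_const (C := min (ε/3) 1) (μ := volume) (s := Set.Ioc (0:ℝ) 1) measure_Ioc_lt_top.ne)
    (hintf2.div_const _), setIntegral_const, smul_eq_mul, measureReal_def, hvol, one_mul,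
    integral_div] at hmono
  rw [← hδdef] at hmono
  have hkey := key n hn1 i
  have hBn := hN n hnN
  have hδ2 : (0:ℝ) < δ ^ 2 := by positivity
  have hFle : (∫ v in Set.Ioc (0:ℝ) 1, |Gn n c v - G c v| ^ 2) / δ ^ 2 ≤ δ := by
    rw [div_le_iff₀ hδ2]
    calc (∫ v in Set.Ioc (0:ℝ) 1, |Gn n c v - G c v| ^ 2) ≤ 2 * L n + 2 * S n := hkey
    _ ≤ δ ^ 3 := hBn.le
    _ = δ * δ ^ 2 := by ring
  rw [intervalIntegral.integral_of_le zero_le_one]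
  linarith
end
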